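/- For the wedge-disclination deformation ψ(x,y,z) = (x cos(αθ) - y sin(αθ), x sin(αθ) + y cos(αθ), z) with α = φ/(2π) and θ = arctan(y/x), the pullback of the Euclidean metric, expressed in cylindrical coordinates, equals dr ⊗ dr + (1+α)² r² dθ ⊗ dθ + dz ⊗ dz. -/

import Mathlib

open Real

noncomputable def wdJ (c r θ : ℝ) : Matrix (Fin 3) (Fin 3) ℝ :=
  !![Real.cos (c * θ), -(r * c * Real.sin (c * θ)), 0;
     Real.sin (c * θ), r * c * Real.cos (c * θ), 0;
     0, 0, 1]

noncomputable def wdL (c r θ : ℝ) : (Fin 3 → ℝ) →L[ℝ] (Fin 3 → ℝ) :=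
  LinearMap.toContinuousLinearMap (Matrix.toLin' (wdJ c r θ))

lemma wd_hasFDerivAt (c r θ z : ℝ) :
    HasFDerivAt
      (fun p : Fin 3 → ℝ => ![p 0 * Real.cos (c * p 1), p 0 * Real.sin (c * p 1), p 2])
      (wdL c r θ) ![r, θ, z] := by
  have e1 : (![r, θ, z] : Fin 3 → ℝ) 1 = θ := rfl
  have h0 : HasFDerivAt (fun p : Fin 3 → ℝ => p 0)
      (ContinuousLinearMap.proj 0 : (Fin 3 → ℝ) →L[ℝ] ℝ) ![r, θ, z] := by exact hasFDerivAt_apply 0 ![r, θ, z]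
  have h1 : HasFDerivAt (fun p : Fin 3 → ℝ => p 1)
      (ContinuousLinearMap.proj 1 : (Fin 3 → ℝ) →L[ℝ] ℝ) ![r, θ, z] := by exact hasFDerivAt_apply 1 ![r, θ, z]
  have h2 : HasFDerivAt (fun p : Fin 3 → ℝ => p 2)
      (ContinuousLinearMap.proj 2 : (Fin 3 → ℝ) →L[ℝ] ℝ) ![r, θ, z] := by exact hasFDerivAt_apply 2 ![r, θ, z]
  have hlin : HasFDerivAt (fun p : Fin 3 → ℝ => c * p 1)
      (c • (ContinuousLinearMap.proj 1 : (Fin 3 → ℝ) →L[ℝ] ℝ)) ![r, θ, z] := h1.const_mul c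
  have hcos : HasFDerivAt (fun p : Fin 3 → ℝ => Real.cos (c * p 1))
      ((-Real.sin (c * θ)) • (c • (ContinuousLinearMap.proj 1 : (Fin 3 → ℝ) →L[ℝ] ℝ)))
      ![r, θ, z] := by
    have := (Real.hasDerivAt_cos (c * θ)).comp_hasFDerivAt ![r, θ, z] (by rw [← e1] at hlin ⊢; exact hlin)
    exact this
  have hsin : HasFDerivAt (fun p : Fin 3 → ℝ => Real.sin (c * p 1))
      ((Real.cos (c * θ)) • (c • (ContinuousLinearMap.proj 1 : (Fin 3 → ℝ) →L[ℝ] ℝ)))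
      ![r, θ, z] := by
    have := (Real.hasDerivAt_sin (c * θ)).comp_hasFDerivAt ![r, θ, z] (by rw [← e1] at hlin ⊢; exact hlin)
    exact this
  rw [hasFDerivAt_pi']
  intro k
  fin_cases k
  · have hmul := h0.fun_mul hcos
    simp only [Fin.zero_eta, Matrix.cons_val_zero] at hmul ⊢
    refine hmul.congr_fderiv ?_
    ext v
    simp [wdL, wdJ, Matrix.toLin'_apply, Matrix.mulVec, dotProduct,
      Fin.sum_univ_three, e1]
    ring
  · have hmul := h0.fun_mul hsin
    simp only [Fin.mk_one, Matrix.cons_val_one, Matrix.head_cons, Matrix.cons_val_zero] at hmul ⊢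
    refine hmul.congr_fderiv ?_
    ext v
    simp [wdL, wdJ, Matrix.toLin'_apply, Matrix.mulVec, dotProduct,
      Fin.sum_univ_three, e1]
    ring
  · simp only [Fin.reduceFinMk, Matrix.cons_val_two, Matrix.tail_cons, Matrix.head_cons]
    refine h2.congr_fderiv ?_
    ext v
    simp [wdL, wdJ, Matrix.toLin'_apply, Matrix.mulVec, dotProduct,
      Fin.sum_univ_three]

/-- Wedge disclination: for ψ(x,y,z) = (x cos(αθ) - y sin(αθ), x sin(αθ) + y cos(αθ), z)
with θ = arctan(y/x), the pullback of the Euclidean metric, expressed in cylindrical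
coordinates (r,θ,z) (i.e. computed for F = ψ ∘ Φ with Φ the cylindrical coordinate map),
equals dr⊗dr + (1+α)² r² dθ⊗dθ + dz⊗dz. -/
theorem wedge_disclination_pullback_metric (α r θ z : ℝ) (hr : 0 < r)
    (hθ₁ : -(π / 2) < θ) (hθ₂ : θ < π / 2) :
    let ψ : (Fin 3 → ℝ) → (Fin 3 → ℝ) := fun p =>
      ![p 0 * Real.cos (α * Real.arctan (p 1 / p 0))
          - p 1 * Real.sin (α * Real.arctan (p 1 / p 0)),
        p 0 * Real.sin (α * Real.arctan (p 1 / p 0))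
          + p 1 * Real.cos (α * Real.arctan (p 1 / p 0)),
        p 2]
    let Φ : (Fin 3 → ℝ) → (Fin 3 → ℝ) := fun q =>
      ![q 0 * Real.cos (q 1), q 0 * Real.sin (q 1), q 2]
    let q : Fin 3 → ℝ := ![r, θ, z]
    (Matrix.of fun i j => ∑ k : Fin 3,
        fderiv ℝ (ψ ∘ Φ) q (Pi.single i 1) k * fderiv ℝ (ψ ∘ Φ) q (Pi.single j 1) k) =
      !![1, 0, 0; 0, (1 + α) ^ 2 * r ^ 2, 0; 0, 0, 1] := by
  intro ψ Φ q
  set c := 1 + α with hc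
  set F : (Fin 3 → ℝ) → (Fin 3 → ℝ) :=
    fun p => ![p 0 * Real.cos (c * p 1), p 0 * Real.sin (c * p 1), p 2] with hF
  have hU : IsOpen {p : Fin 3 → ℝ | 0 < p 0 ∧ -(π / 2) < p 1 ∧ p 1 < π / 2} := by
    refine (isOpen_lt continuous_const (continuous_apply 0)).inter
      ((isOpen_lt continuous_const (continuous_apply 1)).inter
        (isOpen_lt (continuous_apply 1) continuous_const))
  have hqU : q ∈ {p : Fin 3 → ℝ | 0 < p 0 ∧ -(π / 2) < p 1 ∧ p 1 < π / 2} := by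
    refine ⟨?_, ?_, ?_⟩ <;> simp [q] <;> assumption
  have key : ∀ p ∈ {p : Fin 3 → ℝ | 0 < p 0 ∧ -(π / 2) < p 1 ∧ p 1 < π / 2},
      (ψ ∘ Φ) p = F p := by
    intro p hp
    obtain ⟨hp0, hp1, hp2⟩ := hp
    have hcpos : 0 < Real.cos (p 1) := Real.cos_pos_of_mem_Ioo ⟨hp1, hp2⟩
    have ha : Real.arctan ((p 0 * Real.sin (p 1)) / (p 0 * Real.cos (p 1))) = p 1 := by
      rw [mul_div_mul_left _ _ (ne_of_gt hp0), ← Real.tan_eq_sin_div_cos,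
        Real.arctan_tan hp1 hp2]
    have hca : c * p 1 = p 1 + α * p 1 := by rw [hc]; ring
    funext i
    fin_cases i <;>
      simp only [ψ, Φ, F, Function.comp_apply, Matrix.cons_val_zero, Matrix.cons_val_one,
        Matrix.head_cons, Matrix.cons_val_two, Matrix.tail_cons, ha, hca,
        Real.cos_add, Real.sin_add] <;> ring
  have hmem : {p : Fin 3 → ℝ | 0 < p 0 ∧ -(π / 2) < p 1 ∧ p 1 < π / 2} ∈ nhds q :=
    hU.mem_nhds hqU
  have hEq : (ψ ∘ Φ) =ᶠ[nhds q] F := Filter.eventuallyEq_of_mem hmem key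
  have hfd : fderiv ℝ (ψ ∘ Φ) q = wdL c r θ := by
    rw [hEq.fderiv_eq]
    exact (wd_hasFDerivAt c r θ z).fderiv
  have h1 := Real.sin_sq_add_cos_sq (c * θ)
  ext i j
  fin_cases i <;> fin_cases j <;>
    simp [hfd, wdL, wdJ, Matrix.toLin'_apply, Matrix.mulVec, dotProduct,
      Fin.sum_univ_three, Pi.single_apply, Matrix.of_apply, Matrix.vecHead, Matrix.vecTail] <;>
    nlinarith [Real.sin_sq_add_cos_sq (c * θ), Real.cos_sq_add_sin_sq (c * θ)]
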